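/- Let the sequences {w^k} and {w̃^k} be generated by GS-ADMM with τ + s > 0. Then for every k and every w* ∈ M*: ‖w^{k+1} − w*‖_H² ≤ ‖w^k − w*‖_H² − ‖w^k − w̃^k‖_G². -/

import Mathlib

open scoped RealInnerProductSpace
open Matrix Filter

/-- Multiplication of a matrix with a vector, viewed as a map between Euclidean spaces. -/
noncomputable def mv {n m : ℕ} (M : Matrix (Fin n) (Fin m) ℝ)
    (v : EuclideanSpace ℝ (Fin m)) : EuclideanSpace ℝ (Fin n) :=
  WithLp.toLp 2 (M.mulVec v)

/-- `sA A x = Σ_i A_i x_i`. -/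
noncomputable def sA {p n : ℕ} {m : Fin p → ℕ}
    (A : ∀ i, Matrix (Fin n) (Fin (m i)) ℝ)
    (x : ∀ i, EuclideanSpace ℝ (Fin (m i))) : EuclideanSpace ℝ (Fin n) :=
  ∑ i, mv (A i) (x i)

/-- The augmented Lagrangian
`L_β(x,y,λ) = Σ_i f_i(x_i) + Σ_j g_j(y_j) − ⟨λ, Ax + By − c⟩ + (β/2)‖Ax + By − c‖²`. -/
noncomputable def Lag {p q n : ℕ} {m : Fin p → ℕ} {d : Fin q → ℕ}
    (A : ∀ i, Matrix (Fin n) (Fin (m i)) ℝ)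
    (B : ∀ j, Matrix (Fin n) (Fin (d j)) ℝ)
    (c : EuclideanSpace ℝ (Fin n))
    (f : ∀ i, EuclideanSpace ℝ (Fin (m i)) → ℝ)
    (g : ∀ j, EuclideanSpace ℝ (Fin (d j)) → ℝ)
    (β : ℝ)
    (x : ∀ i, EuclideanSpace ℝ (Fin (m i)))
    (y : ∀ j, EuclideanSpace ℝ (Fin (d j)))
    (lam : EuclideanSpace ℝ (Fin n)) : ℝ :=
  (∑ i, f i (x i)) + (∑ j, g j (y j)) - ⟪lam, sA A x + sA B y - c⟫
    + β / 2 * ‖sA A x + sA B y - c‖ ^ 2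

/-- The `H`-quadratic form `‖(x,y,λ)‖_H²`. -/
noncomputable def Hform {p q n : ℕ} {m : Fin p → ℕ} {d : Fin q → ℕ}
    (A : ∀ i, Matrix (Fin n) (Fin (m i)) ℝ)
    (B : ∀ j, Matrix (Fin n) (Fin (d j)) ℝ)
    (β σ1 σ2 τ s : ℝ)
    (x : ∀ i, EuclideanSpace ℝ (Fin (m i)))
    (y : ∀ j, EuclideanSpace ℝ (Fin (d j)))
    (lam : EuclideanSpace ℝ (Fin n)) : ℝ :=
  β * ((σ1 + 1) * (∑ i, ‖mv (A i) (x i)‖ ^ 2) - ‖sA A x‖ ^ 2)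
    + (σ2 + 1) * β * (∑ j, ‖mv (B j) (y j)‖ ^ 2)
    - τ * s / (τ + s) * β * ‖sA B y‖ ^ 2
    - 2 * τ / (τ + s) * ⟪sA B y, lam⟫
    + 1 / (β * (τ + s)) * ‖lam‖ ^ 2

/-- The `G`-quadratic form `‖(x,y,λ)‖_G²`. -/
noncomputable def Gform {p q n : ℕ} {m : Fin p → ℕ} {d : Fin q → ℕ}
    (A : ∀ i, Matrix (Fin n) (Fin (m i)) ℝ)
    (B : ∀ j, Matrix (Fin n) (Fin (d j)) ℝ)
    (β σ1 σ2 τ s : ℝ)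
    (x : ∀ i, EuclideanSpace ℝ (Fin (m i)))
    (y : ∀ j, EuclideanSpace ℝ (Fin (d j)))
    (lam : EuclideanSpace ℝ (Fin n)) : ℝ :=
  β * ((σ1 + 1) * (∑ i, ‖mv (A i) (x i)‖ ^ 2) - ‖sA A x‖ ^ 2)
    + (σ2 + 1) * β * (∑ j, ‖mv (B j) (y j)‖ ^ 2)
    - s * β * ‖sA B y‖ ^ 2
    + 2 * (s - 1) * ⟪sA B y, lam⟫
    + (2 - τ - s) / β * ‖lam‖ ^ 2

/-- The `H_y`-quadratic form `‖y‖_{H_y}² = β[(σ₂+1)Σ_j‖B_j y_j‖² − ‖By‖²]`. -/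
noncomputable def Hyform {q n : ℕ} {d : Fin q → ℕ}
    (B : ∀ j, Matrix (Fin n) (Fin (d j)) ℝ)
    (β σ2 : ℝ)
    (y : ∀ j, EuclideanSpace ℝ (Fin (d j))) : ℝ :=
  β * ((σ2 + 1) * (∑ j, ‖mv (B j) (y j)‖ ^ 2) - ‖sA B y‖ ^ 2)

/-!
Each block update minimises a convex function plus a quadratic over a convex set, so it satisfies
a first-order variational inequality. Summing these over all blocks and adding the variational
inequality that characterises `w*`, tested at `w̃ᵏ`, gives `⟨w̃ᵏ - w*, Q (wᵏ - w̃ᵏ)⟩ ≥ 0`. The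
contraction then follows from the identity
`‖wᵏ - w*‖_H² - ‖wᵏ⁺¹ - w*‖_H² - ‖wᵏ - w̃ᵏ‖_G² = 2 ⟨w̃ᵏ - w*, Q (wᵏ - w̃ᵏ)⟩`,
which only uses the two multiplier updates and the feasibility `A x* + B y* = c` of `w*`.
-/

lemma mv_add {n m : ℕ} (M : Matrix (Fin n) (Fin m) ℝ) (u v : EuclideanSpace ℝ (Fin m)) :
    mv M (u + v) = mv M u + mv M v :=
  congrArg (WithLp.toLp 2) (M.mulVec_add u.ofLp v.ofLp)

lemma mv_sub {n m : ℕ} (M : Matrix (Fin n) (Fin m) ℝ) (u v : EuclideanSpace ℝ (Fin m)) :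
    mv M (u - v) = mv M u - mv M v :=
  congrArg (WithLp.toLp 2) (M.mulVec_sub u.ofLp v.ofLp)

lemma mv_smul {n m : ℕ} (M : Matrix (Fin n) (Fin m) ℝ) (t : ℝ) (u : EuclideanSpace ℝ (Fin m)) :
    mv M (t • u) = t • mv M u :=
  congrArg (WithLp.toLp 2) (M.mulVec_smul t u.ofLp)

lemma inner_mv_transpose {n m : ℕ} (M : Matrix (Fin n) (Fin m) ℝ)
    (u : EuclideanSpace ℝ (Fin m)) (v : EuclideanSpace ℝ (Fin n)) :
    ⟪u, mv Mᵀ v⟫ = ⟪mv M u, v⟫ := by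
  simp only [mv, EuclideanSpace.inner_eq_star_dotProduct, star_trivial]
  rw [dotProduct_comm, ← vecMul_transpose, transpose_transpose, dotProduct_mulVec,
    dotProduct_comm]

lemma Finset.sum_apply_update {ι M : Type*} [Fintype ι] [DecidableEq ι] [AddCommGroup M]
    {α : ι → Type*} (F : ∀ i, α i → M) (x : ∀ i, α i) (i : ι) (ξ : α i) :
    ∑ l, F l (Function.update x i ξ l) = ∑ l, F l (x l) + (F i ξ - F i (x i)) := by
  simp only [Function.apply_update F, Finset.sum_update_of_mem (Finset.mem_univ i),
    Finset.sum_eq_add_sum_sdiff_singleton_of_mem (Finset.mem_univ i) (fun l => F l (x l))]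
  abel

section sA

variable {p n : ℕ} {m : Fin p → ℕ} (A : ∀ i, Matrix (Fin n) (Fin (m i)) ℝ)

lemma sA_sub (u v : ∀ i, EuclideanSpace ℝ (Fin (m i))) :
    sA A (fun i => u i - v i) = sA A u - sA A v := by
  simp only [sA, mv_sub, Finset.sum_sub_distrib]

lemma sA_update (x : ∀ i, EuclideanSpace ℝ (Fin (m i))) (i : Fin p)
    (ξ : EuclideanSpace ℝ (Fin (m i))) :
    sA A (Function.update x i ξ) = sA A x + mv (A i) (ξ - x i) := by
  rw [sA, Finset.sum_apply_update (fun l => mv (A l)), mv_sub]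
  rfl

lemma sum_inner_mv_transpose (u : ∀ i, EuclideanSpace ℝ (Fin (m i)))
    (l : EuclideanSpace ℝ (Fin n)) :
    ∑ i, ⟪u i, mv (A i)ᵀ l⟫ = ⟪sA A u, l⟫ := by
  simp only [inner_mv_transpose, sA, sum_inner]

lemma sum_inner_mv_add_smul (u v : ∀ i, EuclideanSpace ℝ (Fin (m i)))
    (W : EuclideanSpace ℝ (Fin n)) (γ : ℝ) :
    ∑ i, ⟪mv (A i) (u i), W + γ • mv (A i) (v i)⟫
      = ⟪sA A u, W⟫ + γ * ∑ i, ⟪mv (A i) (u i), mv (A i) (v i)⟫ := by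
  simp only [inner_add_right, real_inner_smul_right, Finset.sum_add_distrib, ← Finset.mul_sum,
    sA, sum_inner]

end sA

lemma nonneg_of_forall_mul_add_sq_nonneg {a C : ℝ}
    (h : ∀ t : ℝ, 0 < t → t ≤ 1 → 0 ≤ t * a + t ^ 2 * C) : 0 ≤ a := by
  have hlim : Tendsto (fun t : ℝ => a + t * C) (nhdsWithin 0 (Set.Ioi 0)) (nhds a) :=
    tendsto_nhdsWithin_of_tendsto_nhds <|
      (by fun_prop : Continuous fun t : ℝ => a + t * C).tendsto' 0 a (by simp)
  refine ge_of_tendsto hlim ?_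
  filter_upwards [Ioo_mem_nhdsGT one_pos] with t ⟨ht0, ht1⟩
  exact nonneg_of_mul_nonneg_right (by linarith [h t ht0 ht1.le]) ht0

theorem ConvexOn.nonneg_of_isMinOn_add {E : Type*} [AddCommGroup E] [Module ℝ E]
    {X : Set E} {f q : E → ℝ} {xh z : E} {a C : ℝ} (hf : ConvexOn ℝ X f)
    (hmin : IsMinOn (f + q) X xh) (hxh : xh ∈ X) (hz : z ∈ X)
    (hq : ∀ t : ℝ, q (xh + t • (z - xh)) = q xh + t * a + t ^ 2 * C) :
    0 ≤ f z - f xh + a := by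
  refine nonneg_of_forall_mul_add_sq_nonneg (C := C) fun t ht0 ht1 => ?_
  have hseg : xh + t • (z - xh) = (1 - t) • xh + t • z := by module
  have hf_seg : f (xh + t • (z - xh)) ≤ (1 - t) * f xh + t * f z := by
    rw [hseg]; exact hf.2 hxh hz (by linarith) ht0.le (by ring)
  have hmin_seg := isMinOn_iff.mp hmin _ (hf.1.add_smul_sub_mem hxh hz ⟨ht0.le, ht1⟩)
  simp only [Pi.add_apply, hq] at hmin_seg
  linarith

lemma augmented_quadratic_add_smul {F : Type*} [NormedAddCommGroup F] [InnerProductSpace ℝ F]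
    (L R δ v : F) (β σ t : ℝ) :
    -⟪L, R + (δ + t • v)⟫ + β / 2 * ‖R + (δ + t • v)‖ ^ 2 + σ * β / 2 * ‖δ + t • v‖ ^ 2
      = (-⟪L, R + δ⟫ + β / 2 * ‖R + δ‖ ^ 2 + σ * β / 2 * ‖δ‖ ^ 2)
        + t * ⟪v, -L + β • R + ((1 + σ) * β) • δ⟫ + t ^ 2 * ((1 + σ) * β / 2 * ‖v‖ ^ 2) := by
  simp only [← real_inner_self_eq_norm_sq, inner_add_left, inner_add_right, inner_neg_right,
    real_inner_smul_left, real_inner_smul_right, real_inner_comm L v, real_inner_comm R v,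
    real_inner_comm δ v, real_inner_comm R δ]
  ring

section GSADMM

variable {p q n : ℕ} {m : Fin p → ℕ} {d : Fin q → ℕ}
  (A : ∀ i, Matrix (Fin n) (Fin (m i)) ℝ) (B : ∀ j, Matrix (Fin n) (Fin (d j)) ℝ)
  (c : EuclideanSpace ℝ (Fin n))
  (f : ∀ i, EuclideanSpace ℝ (Fin (m i)) → ℝ) (g : ∀ j, EuclideanSpace ℝ (Fin (d j)) → ℝ)

lemma Lag_comm (β : ℝ) (x : ∀ i, EuclideanSpace ℝ (Fin (m i)))
    (y : ∀ j, EuclideanSpace ℝ (Fin (d j))) (L : EuclideanSpace ℝ (Fin n)) :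
    Lag A B c f g β x y L = Lag B A c g f β y x L := by
  simp only [Lag, add_comm (sA A x), add_comm (∑ i, f i (x i))]

lemma Lag_update (β : ℝ) (x : ∀ i, EuclideanSpace ℝ (Fin (m i)))
    (y : ∀ j, EuclideanSpace ℝ (Fin (d j))) (L : EuclideanSpace ℝ (Fin n)) (i : Fin p)
    (ξ : EuclideanSpace ℝ (Fin (m i))) :
    Lag A B c f g β (Function.update x i ξ) y L
      = (∑ l, f l (x l)) + (f i ξ - f i (x i)) + ∑ j, g j (y j)
        - ⟪L, (sA A x + sA B y - c) + mv (A i) (ξ - x i)⟫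
        + β / 2 * ‖(sA A x + sA B y - c) + mv (A i) (ξ - x i)‖ ^ 2 := by
  rw [Lag, Finset.sum_apply_update f, sA_update]
  congr 4 <;> abel

theorem Lag_update_vi (β σ : ℝ) (x : ∀ i, EuclideanSpace ℝ (Fin (m i)))
    (y : ∀ j, EuclideanSpace ℝ (Fin (d j))) (L : EuclideanSpace ℝ (Fin n)) (i : Fin p)
    {X : Set (EuclideanSpace ℝ (Fin (m i)))} {xh z : EuclideanSpace ℝ (Fin (m i))}
    (hf : ConvexOn ℝ X (f i)) (hmin : xh ∈ X ∧ ∀ z ∈ X,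
      Lag A B c f g β (Function.update x i xh) y L + σ * β / 2 * ‖mv (A i) (xh - x i)‖ ^ 2
        ≤ Lag A B c f g β (Function.update x i z) y L + σ * β / 2 * ‖mv (A i) (z - x i)‖ ^ 2)
    (hz : z ∈ X) :
    f i xh - f i z ≤ ⟪mv (A i) (xh - z),
      L - β • (sA A x + sA B y - c) + ((1 + σ) * β) • mv (A i) (x i - xh)⟫ := by
  set R := sA A x + sA B y - c
  set Q : EuclideanSpace ℝ (Fin (m i)) → ℝ := fun ξ =>
    -⟪L, R + mv (A i) (ξ - x i)⟫ + β / 2 * ‖R + mv (A i) (ξ - x i)‖ ^ 2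
      + σ * β / 2 * ‖mv (A i) (ξ - x i)‖ ^ 2
  have hQmin : IsMinOn (f i + Q) X xh := isMinOn_iff.mpr fun ξ hξ => by
    have := hmin.2 ξ hξ
    simp only [Lag_update] at this
    simp only [Pi.add_apply, Q]
    linarith
  have hQ t : Q (xh + t • (z - xh)) = Q xh
      + t * ⟪mv (A i) (z - xh), -L + β • R + ((1 + σ) * β) • mv (A i) (xh - x i)⟫
      + t ^ 2 * ((1 + σ) * β / 2 * ‖mv (A i) (z - xh)‖ ^ 2) := by
    have : mv (A i) (xh + t • (z - xh) - x i) = mv (A i) (xh - x i) + t • mv (A i) (z - xh) := by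
      rw [← mv_smul, ← mv_add]; congr 1; abel
    simp only [Q, this, augmented_quadratic_add_smul]
  have key := hf.nonneg_of_isMinOn_add hQmin hmin.1 hz hQ
  simp only [mv_sub, inner_sub_left, inner_add_right, inner_sub_right, inner_neg_right,
    real_inner_smul_right] at key ⊢
  linarith

/-- The variational inequality characterising `M*`; the membership `w* ∈ M` is kept separate. -/
def IsVISolution (X : ∀ i, Set (EuclideanSpace ℝ (Fin (m i))))
    (Y : ∀ j, Set (EuclideanSpace ℝ (Fin (d j)))) (xs : ∀ i, EuclideanSpace ℝ (Fin (m i)))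
    (ys : ∀ j, EuclideanSpace ℝ (Fin (d j))) (ls : EuclideanSpace ℝ (Fin n)) : Prop :=
  ∀ (xx : ∀ i, EuclideanSpace ℝ (Fin (m i))) (yy : ∀ j, EuclideanSpace ℝ (Fin (d j)))
    (ll : EuclideanSpace ℝ (Fin n)),
    (∀ i, xx i ∈ X i) → (∀ j, yy j ∈ Y j) →
    (∑ i, f i (xx i)) + (∑ j, g j (yy j)) - ((∑ i, f i (xs i)) + (∑ j, g j (ys j)))
      + ((∑ i, ⟪xx i - xs i, -(mv (A i)ᵀ ls)⟫) + (∑ j, ⟪yy j - ys j, -(mv (B j)ᵀ ls)⟫)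
        + ⟪ll - ls, sA A xs + sA B ys - c⟫) ≥ 0

section IsVISolution

variable {A B c f g} {X : ∀ i, Set (EuclideanSpace ℝ (Fin (m i)))}
  {Y : ∀ j, Set (EuclideanSpace ℝ (Fin (d j)))} {xs : ∀ i, EuclideanSpace ℝ (Fin (m i))}
  {ys : ∀ j, EuclideanSpace ℝ (Fin (d j))} {ls : EuclideanSpace ℝ (Fin n)}

theorem IsVISolution.feasible (h : IsVISolution A B c f g X Y xs ys ls)
    (hxs : ∀ i, xs i ∈ X i) (hys : ∀ j, ys j ∈ Y j) : sA A xs + sA B ys = c := by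
  have h0 := h xs ys (ls - (sA A xs + sA B ys - c)) hxs hys
  simp only [sub_self, inner_zero_left, Finset.sum_const_zero, zero_add, sub_sub_cancel_left,
    inner_neg_left, real_inner_self_eq_norm_sq] at h0
  simpa [sub_eq_zero] using h0

theorem IsVISolution.inner_le (h : IsVISolution A B c f g X Y xs ys ls)
    (hfeas : sA A xs + sA B ys = c) {xx : ∀ i, EuclideanSpace ℝ (Fin (m i))}
    {yy : ∀ j, EuclideanSpace ℝ (Fin (d j))} (hxx : ∀ i, xx i ∈ X i) (hyy : ∀ j, yy j ∈ Y j) :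
    ⟪sA A (fun i => xx i - xs i) + sA B (fun j => yy j - ys j), ls⟫
      ≤ (∑ i, f i (xx i)) + (∑ j, g j (yy j)) - ((∑ i, f i (xs i)) + (∑ j, g j (ys j))) := by
  have h0 := h xx yy ls hxx hyy
  simp only [hfeas, sub_self, inner_zero_right, add_zero, inner_neg_right,
    Finset.sum_neg_distrib, sum_inner_mv_transpose, inner_add_left] at h0 ⊢
  linarith

end IsVISolution

/-- `⟨(x, y, λ), Q (x', y', λ')⟩` for the block matrix
`Q = [[β((σ₁+1) diag(A_iᵀA_i) − AᵀA), 0, 0], [0, (σ₂+1)β diag(B_jᵀB_j), −τBᵀ], [0, −B, I/β]]`. -/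
noncomputable def Qform (β σ1 σ2 τ : ℝ) (x x' : ∀ i, EuclideanSpace ℝ (Fin (m i)))
    (y y' : ∀ j, EuclideanSpace ℝ (Fin (d j))) (lam lam' : EuclideanSpace ℝ (Fin n)) : ℝ :=
  β * ((σ1 + 1) * (∑ i, ⟪mv (A i) (x i), mv (A i) (x' i)⟫) - ⟪sA A x, sA A x'⟫)
    + (σ2 + 1) * β * (∑ j, ⟪mv (B j) (y j), mv (B j) (y' j)⟫)
    - τ * ⟪sA B y, lam'⟫
    + ⟪lam, β⁻¹ • lam' - sA B y'⟫

variable {A B c f g}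

theorem Qform_nonneg {β σ1 σ2 τ : ℝ} (hβ : β ≠ 0)
    {x0 x1 xs : ∀ i, EuclideanSpace ℝ (Fin (m i))} {y0 y1 ys : ∀ j, EuclideanSpace ℝ (Fin (d j))}
    {l0 lh lt ls : EuclideanSpace ℝ (Fin n)} (hfeas : sA A xs + sA B ys = c)
    (hlh : lh = l0 - (τ * β) • (sA A x1 + sA B y0 - c))
    (hlt : lt = l0 - β • (sA A x1 + sA B y0 - c))
    (hx : ∀ i, f i (x1 i) - f i (xs i) ≤ ⟪mv (A i) (x1 i - xs i),
      l0 - β • (sA A x0 + sA B y0 - c) + ((1 + σ1) * β) • mv (A i) (x0 i - x1 i)⟫)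
    (hy : ∀ j, g j (y1 j) - g j (ys j) ≤ ⟪mv (B j) (y1 j - ys j),
      lh - β • (sA B y0 + sA A x1 - c) + ((1 + σ2) * β) • mv (B j) (y0 j - y1 j)⟫)
    (hsol : ⟪sA A (fun i => x1 i - xs i) + sA B (fun j => y1 j - ys j), ls⟫
      ≤ (∑ i, f i (x1 i)) + (∑ j, g j (y1 j)) - ((∑ i, f i (xs i)) + (∑ j, g j (ys j)))) :
    0 ≤ Qform A B β σ1 σ2 τ (fun i => x1 i - xs i) (fun i => x0 i - x1 i)
          (fun j => y1 j - ys j) (fun j => y0 j - y1 j) (lt - ls) (l0 - lt) := by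
  have hr0 : sA A x0 + sA B y0 - c
      = (sA A x1 + sA B y0 - c) + sA A (fun i => x0 i - x1 i) := by
    rw [sA_sub]; abel
  have hr1 : β⁻¹ • (β • (sA A x1 + sA B y0 - c)) - sA B (fun j => y0 j - y1 j)
      = sA A (fun i => x1 i - xs i) + sA B (fun j => y1 j - ys j) := by
    rw [inv_smul_smul₀ hβ, sA_sub, sA_sub, sA_sub, ← hfeas]; abel
  have hxsum := Finset.sum_le_sum (s := .univ) fun i _ => hx i
  have hysum := Finset.sum_le_sum (s := .univ) fun j _ => hy j
  rw [Finset.sum_sub_distrib, sum_inner_mv_add_smul, hr0] at hxsum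
  rw [Finset.sum_sub_distrib, sum_inner_mv_add_smul, hlh, add_comm (sA B y0)] at hysum
  rw [Qform, real_inner_comm _ (lt - ls), hlt, sub_sub_cancel, hr1]
  simp only [inner_add_left, inner_add_right, inner_sub_right, real_inner_smul_right]
    at hxsum hysum hsol ⊢
  linarith

theorem Hform_sub_Hform_sub_Gform {β σ1 σ2 τ s : ℝ} (hβ : β ≠ 0) (hτs : τ + s ≠ 0)
    {x0 x1 xs : ∀ i, EuclideanSpace ℝ (Fin (m i))} {y0 y1 ys : ∀ j, EuclideanSpace ℝ (Fin (d j))}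
    {l0 lt l1 ls : EuclideanSpace ℝ (Fin n)} (hfeas : sA A xs + sA B ys = c)
    (hlt : lt = l0 - β • (sA A x1 + sA B y0 - c))
    (hl1 : l1 = l0 - (τ * β) • (sA A x1 + sA B y0 - c) - (s * β) • (sA A x1 + sA B y1 - c)) :
    Hform A B β σ1 σ2 τ s (fun i => x0 i - xs i) (fun j => y0 j - ys j) (l0 - ls)
      - Hform A B β σ1 σ2 τ s (fun i => x1 i - xs i) (fun j => y1 j - ys j) (l1 - ls)
      - Gform A B β σ1 σ2 τ s (fun i => x0 i - x1 i) (fun j => y0 j - y1 j) (l0 - lt)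
      = 2 * Qform A B β σ1 σ2 τ (fun i => x1 i - xs i) (fun i => x0 i - x1 i)
          (fun j => y1 j - ys j) (fun j => y0 j - y1 j) (lt - ls) (l0 - lt) := by
  have hx i : mv (A i) (x1 i - xs i) = mv (A i) (x0 i - xs i) - mv (A i) (x0 i - x1 i) := by
    rw [← mv_sub, sub_sub_sub_cancel_left]
  have hy j : mv (B j) (y1 j - ys j) = mv (B j) (y0 j - ys j) - mv (B j) (y0 j - y1 j) := by
    rw [← mv_sub, sub_sub_sub_cancel_left]
  have hsx : sA A (fun i => x1 i - xs i)
      = sA A (fun i => x0 i - xs i) - sA A (fun i => x0 i - x1 i) := by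
    simp only [sA_sub]; abel
  have hsy : sA B (fun j => y1 j - ys j)
      = sA B (fun j => y0 j - ys j) - sA B (fun j => y0 j - y1 j) := by
    simp only [sA_sub]; abel
  have hr : sA A x1 + sA B y0 - c = sA A (fun i => x0 i - xs i) - sA A (fun i => x0 i - x1 i)
      + sA B (fun j => y0 j - ys j) := by
    simp only [sA_sub]; rw [← hfeas]; abel
  have hr' : sA A x1 + sA B y1 - c = sA A (fun i => x0 i - xs i)
      - sA A (fun i => x0 i - x1 i) + sA B (fun j => y0 j - ys j)
      - sA B (fun j => y0 j - y1 j) := by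
    simp only [sA_sub]; rw [← hfeas]; abel
  have hl1' : l1 - ls = (l0 - ls) - (τ * β) • (sA A x1 + sA B y0 - c)
      - (s * β) • (sA A x1 + sA B y1 - c) := by
    rw [hl1]; abel
  have hlt' : lt - ls = (l0 - ls) - β • (sA A x1 + sA B y0 - c) := by rw [hlt]; abel
  have hlt'' : l0 - lt = β • (sA A x1 + sA B y0 - c) := by rw [hlt]; abel
  simp only [Hform, Gform, Qform, hx, hy, hsx, hsy, hl1', hlt', hlt'', hr, hr']
  generalize sA A (fun i => x0 i - xs i) = sa
  generalize sA A (fun i => x0 i - x1 i) = se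
  generalize sA B (fun j => y0 j - ys j) = sb
  generalize sA B (fun j => y0 j - y1 j) = sn
  generalize l0 - ls = v
  simp only [norm_sub_sq_real, inner_sub_left, real_inner_self_eq_norm_sq, Finset.sum_add_distrib,
    Finset.sum_sub_distrib, ← Finset.mul_sum]
  simp only [← real_inner_self_eq_norm_sq, inner_sub_left, inner_sub_right, inner_add_left,
    inner_add_right, real_inner_smul_left, real_inner_smul_right]
  simp only [real_inner_comm se sa, real_inner_comm sb sa, real_inner_comm sb se,
    real_inner_comm sn sa, real_inner_comm sn se, real_inner_comm sn sb,
    real_inner_comm v sb, real_inner_comm v sn]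
  field_simp
  ring

end GSADMM

theorem stmt8_general
    {p q n : ℕ}
    {m : Fin p → ℕ} {d : Fin q → ℕ}
    (A : ∀ i, Matrix (Fin n) (Fin (m i)) ℝ)
    (B : ∀ j, Matrix (Fin n) (Fin (d j)) ℝ)
    (c : EuclideanSpace ℝ (Fin n))
    (X : ∀ i, Set (EuclideanSpace ℝ (Fin (m i))))
    (Y : ∀ j, Set (EuclideanSpace ℝ (Fin (d j))))
    (hXcv : ∀ i, Convex ℝ (X i))
    (hYcv : ∀ j, Convex ℝ (Y j))
    (f : ∀ i, EuclideanSpace ℝ (Fin (m i)) → ℝ)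
    (g : ∀ j, EuclideanSpace ℝ (Fin (d j)) → ℝ)
    (hf : ∀ i, ConvexOn ℝ Set.univ (f i))
    (hg : ∀ j, ConvexOn ℝ Set.univ (g j))
    (β σ1 σ2 τ s : ℝ) (hβ : 0 < β)
    (x : ℕ → ∀ i, EuclideanSpace ℝ (Fin (m i)))
    (y : ℕ → ∀ j, EuclideanSpace ℝ (Fin (d j)))
    (lam lamh : ℕ → EuclideanSpace ℝ (Fin n))
    (hxmin : ∀ k i, x (k+1) i ∈ X i ∧ ∀ z ∈ X i,
      Lag A B c f g β (Function.update (x k) i (x (k+1) i)) (y k) (lam k)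
          + σ1 * β / 2 * ‖mv (A i) (x (k+1) i - x k i)‖ ^ 2
        ≤ Lag A B c f g β (Function.update (x k) i z) (y k) (lam k)
          + σ1 * β / 2 * ‖mv (A i) (z - x k i)‖ ^ 2)
    (hlamh : ∀ k, lamh k = lam k - (τ * β) • (sA A (x (k+1)) + sA B (y k) - c))
    (hymin : ∀ k j, y (k+1) j ∈ Y j ∧ ∀ z ∈ Y j,
      Lag A B c f g β (x (k+1)) (Function.update (y k) j (y (k+1) j)) (lamh k)
          + σ2 * β / 2 * ‖mv (B j) (y (k+1) j - y k j)‖ ^ 2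
        ≤ Lag A B c f g β (x (k+1)) (Function.update (y k) j z) (lamh k)
          + σ2 * β / 2 * ‖mv (B j) (z - y k j)‖ ^ 2)
    (hlam : ∀ k, lam (k+1) = lamh k - (s * β) • (sA A (x (k+1)) + sA B (y (k+1)) - c))
    (hτs : 0 < τ + s)
    (xs : ∀ i, EuclideanSpace ℝ (Fin (m i)))
    (ys : ∀ j, EuclideanSpace ℝ (Fin (d j)))
    (ls : EuclideanSpace ℝ (Fin n))
    (hxs : ∀ i, xs i ∈ X i) (hys : ∀ j, ys j ∈ Y j)
    (hsol : ∀ (xx : ∀ i, EuclideanSpace ℝ (Fin (m i)))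
        (yy : ∀ j, EuclideanSpace ℝ (Fin (d j)))
        (ll : EuclideanSpace ℝ (Fin n)),
        (∀ i, xx i ∈ X i) → (∀ j, yy j ∈ Y j) →
        (∑ i, f i (xx i)) + (∑ j, g j (yy j))
            - ((∑ i, f i (xs i)) + (∑ j, g j (ys j)))
          + ((∑ i, ⟪xx i - xs i, -(mv (A i)ᵀ ls)⟫)
            + (∑ j, ⟪yy j - ys j, -(mv (B j)ᵀ ls)⟫)
            + ⟪ll - ls, sA A xs + sA B ys - c⟫) ≥ 0) :
    ∀ k : ℕ,
      Hform A B β σ1 σ2 τ s (fun i => x (k+1) i - xs i)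
          (fun j => y (k+1) j - ys j) (lam (k+1) - ls)
        ≤ Hform A B β σ1 σ2 τ s (fun i => x k i - xs i)
            (fun j => y k j - ys j) (lam k - ls)
          - Gform A B β σ1 σ2 τ s (fun i => x k i - x (k+1) i)
              (fun j => y k j - y (k+1) j)
              (lam k - (lam k - β • (sA A (x (k+1)) + sA B (y k) - c))) := by
  have hfeas := IsVISolution.feasible hsol hxs hys
  intro k
  have hx i := Lag_update_vi A B c f g β σ1 (x k) (y k) (lam k) i
    ((hf i).subset (Set.subset_univ _) (hXcv i)) (hxmin k i) (hxs i)
  have hy j := Lag_update_vi B A c g f β σ2 (y k) (x (k+1)) (lamh k) j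
    ((hg j).subset (Set.subset_univ _) (hYcv j))
    (by simpa only [Lag_comm A B c f g β] using hymin k j) (hys j)
  have hQ := Qform_nonneg hβ.ne' hfeas (hlamh k) rfl hx hy
    (IsVISolution.inner_le hsol hfeas (fun i => (hxmin k i).1) (fun j => (hymin k j).1))
  have hid := Hform_sub_Hform_sub_Gform (σ1 := σ1) (σ2 := σ2) (x0 := x k) (l1 := lam (k+1))
    (ls := ls) hβ.ne' hτs.ne' hfeas rfl (by rw [hlam k, hlamh k])
  linarith

/-- contraction of GS-ADMM toward any solution `w* ∈ M*`:
`‖w^{k+1} − w*‖_H² ≤ ‖w^k − w*‖_H² − ‖w^k − w̃^k‖_G²`. -/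
theorem stmt8
    {p q n : ℕ} (hp : 1 ≤ p) (hq : 1 ≤ q)
    {m : Fin p → ℕ} {d : Fin q → ℕ}
    (A : ∀ i, Matrix (Fin n) (Fin (m i)) ℝ)
    (B : ∀ j, Matrix (Fin n) (Fin (d j)) ℝ)
    (hA : ∀ i, LinearIndependent ℝ (fun l => (A i)ᵀ l))
    (hB : ∀ j, LinearIndependent ℝ (fun l => (B j)ᵀ l))
    (c : EuclideanSpace ℝ (Fin n))
    (X : ∀ i, Set (EuclideanSpace ℝ (Fin (m i))))
    (Y : ∀ j, Set (EuclideanSpace ℝ (Fin (d j))))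
    (hXne : ∀ i, (X i).Nonempty) (hXcl : ∀ i, IsClosed (X i)) (hXcv : ∀ i, Convex ℝ (X i))
    (hYne : ∀ j, (Y j).Nonempty) (hYcl : ∀ j, IsClosed (Y j)) (hYcv : ∀ j, Convex ℝ (Y j))
    (f : ∀ i, EuclideanSpace ℝ (Fin (m i)) → ℝ)
    (g : ∀ j, EuclideanSpace ℝ (Fin (d j)) → ℝ)
    (hf : ∀ i, ConvexOn ℝ Set.univ (f i))
    (hg : ∀ j, ConvexOn ℝ Set.univ (g j))
    (β σ1 σ2 τ s : ℝ) (hβ : 0 < β)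
    (x : ℕ → ∀ i, EuclideanSpace ℝ (Fin (m i)))
    (y : ℕ → ∀ j, EuclideanSpace ℝ (Fin (d j)))
    (lam lamh : ℕ → EuclideanSpace ℝ (Fin n))
    (hxmin : ∀ k i, x (k+1) i ∈ X i ∧ ∀ z ∈ X i,
      Lag A B c f g β (Function.update (x k) i (x (k+1) i)) (y k) (lam k)
          + σ1 * β / 2 * ‖mv (A i) (x (k+1) i - x k i)‖ ^ 2
        ≤ Lag A B c f g β (Function.update (x k) i z) (y k) (lam k)
          + σ1 * β / 2 * ‖mv (A i) (z - x k i)‖ ^ 2)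
    (hlamh : ∀ k, lamh k = lam k - (τ * β) • (sA A (x (k+1)) + sA B (y k) - c))
    (hymin : ∀ k j, y (k+1) j ∈ Y j ∧ ∀ z ∈ Y j,
      Lag A B c f g β (x (k+1)) (Function.update (y k) j (y (k+1) j)) (lamh k)
          + σ2 * β / 2 * ‖mv (B j) (y (k+1) j - y k j)‖ ^ 2
        ≤ Lag A B c f g β (x (k+1)) (Function.update (y k) j z) (lamh k)
          + σ2 * β / 2 * ‖mv (B j) (z - y k j)‖ ^ 2)
    (hlam : ∀ k, lam (k+1) = lamh k - (s * β) • (sA A (x (k+1)) + sA B (y (k+1)) - c))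
    (hτs : 0 < τ + s)
    (xs : ∀ i, EuclideanSpace ℝ (Fin (m i)))
    (ys : ∀ j, EuclideanSpace ℝ (Fin (d j)))
    (ls : EuclideanSpace ℝ (Fin n))
    (hxs : ∀ i, xs i ∈ X i) (hys : ∀ j, ys j ∈ Y j)
    (hsol : ∀ (xx : ∀ i, EuclideanSpace ℝ (Fin (m i)))
        (yy : ∀ j, EuclideanSpace ℝ (Fin (d j)))
        (ll : EuclideanSpace ℝ (Fin n)),
        (∀ i, xx i ∈ X i) → (∀ j, yy j ∈ Y j) →
        (∑ i, f i (xx i)) + (∑ j, g j (yy j))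
            - ((∑ i, f i (xs i)) + (∑ j, g j (ys j)))
          + ((∑ i, ⟪xx i - xs i, -(mv (A i)ᵀ ls)⟫)
            + (∑ j, ⟪yy j - ys j, -(mv (B j)ᵀ ls)⟫)
            + ⟪ll - ls, sA A xs + sA B ys - c⟫) ≥ 0) :
    ∀ k : ℕ,
      Hform A B β σ1 σ2 τ s (fun i => x (k+1) i - xs i)
          (fun j => y (k+1) j - ys j) (lam (k+1) - ls)
        ≤ Hform A B β σ1 σ2 τ s (fun i => x k i - xs i)
            (fun j => y k j - ys j) (lam k - ls)
          - Gform A B β σ1 σ2 τ s (fun i => x k i - x (k+1) i)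
              (fun j => y k j - y (k+1) j)
              (lam k - (lam k - β • (sA A (x (k+1)) + sA B (y k) - c))) :=
  stmt8_general A B c X Y hXcv hYcv f g hf hg β σ1 σ2 τ s hβ x y lam lamh hxmin hlamh hymin hlam hτs
    xs ys ls hxs hys hsol
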